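/- Let ι: G → T(G,q), ι(g) = [(g,0)], and ε: T(G,q) → ℚ/ℤ, ε([(g,a)]) = a + ℤ. Then the restriction of ι to torsion subgroups is an injective homomorphism from the torsion subgroup of G into that of T(G,q), whose image is exactly the kernel of the restriction of ε to the torsion subgroup of T(G,q). If moreover G is divisible (for every x ∈ G and every positive integer m there is y ∈ G with m•y = x), then ε restricted to the torsion subgroup of T(G,q) is surjective onto ℚ/ℤ. -/
import Mathlib

/-- The Tate group `T(G,q) = (G × ℚ) ⧸ ⟨(q,1)⟩`. -/
abbrev TateGroup (G : Type*) [AddCommGroup G] (q : G) : Type _ :=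
  (G × ℚ) ⧸ AddSubgroup.zmultiples (q, (1 : ℚ))

/-- The homomorphism `ι : G → T(G,q)`, `ι(g) = [(g,0)]`. -/
def tateIota (G : Type*) [AddCommGroup G] (q : G) : G →+ TateGroup G q :=
  (QuotientAddGroup.mk' (AddSubgroup.zmultiples (q, (1 : ℚ)))).comp (AddMonoidHom.inl G ℚ)

/-- The homomorphism `ε : T(G,q) → ℚ/ℤ`, `ε [(g,a)] = a + ℤ`. -/
def tateEps (G : Type*) [AddCommGroup G] (q : G) :
    TateGroup G q →+ ℚ ⧸ AddSubgroup.zmultiples (1 : ℚ) :=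
  QuotientAddGroup.map _ _ (AddMonoidHom.snd G ℚ) (by
    rintro ⟨g, a⟩ hga
    obtain ⟨n, hn⟩ := AddSubgroup.mem_zmultiples_iff.mp hga
    refine AddSubgroup.mem_comap.mpr (AddSubgroup.mem_zmultiples_iff.mpr ⟨n, ?_⟩)
    have := congrArg Prod.snd hn
    simpa using this)

theorem stmt5 (G : Type*) [AddCommGroup G] (q : G) :
    (∀ g : G, IsOfFinAddOrder g → IsOfFinAddOrder (tateIota G q g)) ∧
    Set.InjOn (tateIota G q) {g : G | IsOfFinAddOrder g} ∧
    (tateIota G q '' {g : G | IsOfFinAddOrder g} =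
      {t : TateGroup G q | IsOfFinAddOrder t ∧ tateEps G q t = 0}) ∧
    ((∀ (x : G) (m : ℕ), 0 < m → ∃ y : G, m • y = x) →
      ∀ r : ℚ ⧸ AddSubgroup.zmultiples (1 : ℚ),
        ∃ t : TateGroup G q, IsOfFinAddOrder t ∧ tateEps G q t = r) := by
  have hiota : ∀ g : G, tateIota G q g = QuotientAddGroup.mk (g, (0:ℚ)) := fun g => rfl
  have heps : ∀ p : G × ℚ, tateEps G q (QuotientAddGroup.mk p) = QuotientAddGroup.mk p.2 :=
    fun p => rfl
  have hfin : ∀ g : G, IsOfFinAddOrder g → IsOfFinAddOrder (tateIota G q g) := by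
    intro g hg
    obtain ⟨n, hn, hng⟩ := isOfFinAddOrder_iff_nsmul_eq_zero.mp hg
    refine isOfFinAddOrder_iff_nsmul_eq_zero.mpr ⟨n, hn, ?_⟩
    rw [← map_nsmul, hng, map_zero]
  refine ⟨hfin, ?_, ?_, ?_⟩
  · intro g _ g' _ h
    rw [hiota, hiota, QuotientAddGroup.eq] at h
    obtain ⟨n, hn⟩ := AddSubgroup.mem_zmultiples_iff.mp h
    have h2 := congrArg Prod.snd hn
    have hn0 : n = 0 := by
      have : (n : ℚ) = 0 := by simpa [zsmul_eq_mul] using h2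
      exact_mod_cast this
    have h1 := congrArg Prod.fst hn
    rw [hn0, zero_smul] at h1
    have : (0 : G) = -g + g' := by simpa using h1
    have := neg_add_eq_zero.mp this.symm
    exact this
  · ext t
    constructor
    · rintro ⟨g, hg, rfl⟩
      refine ⟨hfin g hg, ?_⟩
      rw [hiota, heps]
      exact (QuotientAddGroup.eq_zero_iff _).mpr (AddSubgroup.zero_mem _)
    · rintro ⟨ht, hε⟩
      induction t using QuotientAddGroup.induction_on with
      | H p =>
        obtain ⟨g, a⟩ := p
        rw [heps] at hε
        obtain ⟨k, hk⟩ := AddSubgroup.mem_zmultiples_iff.mp ((QuotientAddGroup.eq_zero_iff _).mp hε)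
        have hak : a = (k : ℚ) := by simpa [zsmul_eq_mul] using hk.symm
        refine ⟨g - k • q, ?_, ?_⟩
        · -- g - k•q is torsion
          obtain ⟨n, hn, hnt⟩ := isOfFinAddOrder_iff_nsmul_eq_zero.mp ht
          have hnt2 : ((QuotientAddGroup.mk (n • (g, a)) : TateGroup G q)) = 0 := by
            have := map_nsmul (QuotientAddGroup.mk' (AddSubgroup.zmultiples (q, (1:ℚ)))) n (g, a)
            exact this.trans hnt
          obtain ⟨m, hm⟩ := AddSubgroup.mem_zmultiples_iff.mp
            ((QuotientAddGroup.eq_zero_iff _).mp hnt2)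
          have h2 := congrArg Prod.snd hm
          have hmk : m = (n : ℤ) * k := by
            have : (m : ℚ) = (n : ℚ) * (k : ℚ) := by
              simpa [zsmul_eq_mul, hak, mul_comm] using h2
            exact_mod_cast this
          have h1 := congrArg Prod.fst hm
          simp only [Prod.smul_fst] at h1
          refine isOfFinAddOrder_iff_nsmul_eq_zero.mpr ⟨n, hn, ?_⟩
          rw [hmk] at h1
          have hkey : n • (k • q) = ((n : ℤ) * k) • q := by
            rw [← natCast_zsmul, smul_smul]
          rw [smul_sub, hkey, h1, sub_self]
        · show tateIota G q (g - k • q) = QuotientAddGroup.mk (g, a)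
          rw [hiota, QuotientAddGroup.eq]
          refine AddSubgroup.mem_zmultiples_iff.mpr ⟨k, ?_⟩
          apply Prod.ext
          · show k • q = -(g - k • q) + g
            abel
          · simpa [zsmul_eq_mul] using hak.symm
  · intro hdiv r
    induction r using QuotientAddGroup.induction_on with
    | H a =>
      obtain ⟨y, hy⟩ := hdiv (a.num • q) a.den a.pos
      refine ⟨QuotientAddGroup.mk (y, a), ?_, heps _⟩
      refine isOfFinAddOrder_iff_nsmul_eq_zero.mpr ⟨a.den, a.pos, ?_⟩
      have : (a.den • ((QuotientAddGroup.mk (y, a)) : TateGroup G q))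
          = QuotientAddGroup.mk (a.den • (y, a)) := rfl
      rw [this, QuotientAddGroup.eq_zero_iff]
      refine AddSubgroup.mem_zmultiples_iff.mpr ⟨a.num, ?_⟩
      apply Prod.ext
      · simpa [Prod.smul_fst] using hy.symm
      · simp [Prod.smul_snd, zsmul_eq_mul, nsmul_eq_mul, Rat.den_mul_eq_num]
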